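/- Let H : ℝ → ℝ be smooth on ℝ∖{0}, satisfy sup_{u ≠ 0} |(1+|u|^ℓ) H^{(k)}(u)| < ∞ for all non-negative integers k, ℓ, and have all odd-order one-sided derivatives vanishing at 0, i.e. H^{(2k+1)}(0⁺) = H^{(2k+1)}(0⁻) = 0 for every integer k ≥ 0. Then for every t > 0 the function T_t^{Neu} H defined for x ≠ 0 by T_t^{Neu} H(x) = ∫_0^∞ [φ_t(x−y) + φ_t(x+y)] H(y · sign(x)) dy is smooth on ℝ∖{0}, satisfies sup_{u ≠ 0} |(1+|u|^ℓ) (T_t^{Neu} H)^{(k)}(u)| < ∞ for all non-negative integers k, ℓ, and has all odd-order one-sided derivatives vanishing at 0: (T_t^{Neu} H)^{(2k+1)}(0⁺) = (T_t^{Neu} H)^{(2k+1)}(0⁻) = 0 for every integer k ≥ 0. -/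

import Mathlib

open MeasureTheory Real Filter Topology Set

/-- The heat kernel `φ_t(x) = (4πt)^{-1/2} exp(-x²/(4t))`. -/
noncomputable def heatKernel (t x : ℝ) : ℝ :=
  (Real.sqrt (4 * Real.pi * t))⁻¹ * Real.exp (-(x ^ 2) / (4 * t))

/-- The Neumann heat semigroup
`T_t^{Neu} H(x) = ∫_0^∞ [φ_t(x−y) + φ_t(x+y)] H(y · sign x) dy`. -/
noncomputable def neumannSemigroup (t : ℝ) (H : ℝ → ℝ) (x : ℝ) : ℝ :=
  ∫ y in Set.Ioi (0 : ℝ),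
    (heatKernel t (x - y) + heatKernel t (x + y)) * H (y * Real.sign x)

lemma heatKernel_contDiff (t : ℝ) : ContDiff ℝ (⊤ : ℕ∞) (heatKernel t) := by
  unfold heatKernel
  exact contDiff_const.mul (((contDiff_id.pow 2).neg.div_const _).exp)

lemma heatKernel_even (t x : ℝ) : heatKernel t (-x) = heatKernel t x := by
  simp [heatKernel, neg_pow]

lemma heatKernel_struct (t : ℝ) (ht : 0 < t) (k : ℕ) :
    ∃ p : Polynomial ℝ, ∀ x, iteratedDeriv k (heatKernel t) x
      = p.eval x * Real.exp (-(x ^ 2) / (4 * t)) := by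
  induction k with
  | zero =>
      exact ⟨Polynomial.C ((Real.sqrt (4 * Real.pi * t))⁻¹), fun x => by
        simp [heatKernel]⟩
  | succ k ih =>
      obtain ⟨p, hp⟩ := ih
      refine ⟨p.derivative - Polynomial.C (2*t)⁻¹ * Polynomial.X * p, fun x => ?_⟩
      rw [iteratedDeriv_succ, funext hp]
      have h1 : HasDerivAt (fun x : ℝ => -(x ^ 2) / (4 * t)) (-(2 * x) / (4 * t)) x := by
        simpa using ((hasDerivAt_pow 2 x).neg.div_const (4*t))
      have h2 : HasDerivAt (fun x : ℝ => p.eval x * Real.exp (-(x ^ 2) / (4 * t)))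
          (p.derivative.eval x * Real.exp (-(x ^ 2) / (4 * t))
            + p.eval x * (Real.exp (-(x ^ 2) / (4 * t)) * (-(2 * x) / (4 * t)))) x :=
        (p.hasDerivAt x).mul h1.exp
      rw [h2.deriv]
      simp only [Polynomial.eval_sub, Polynomial.eval_mul, Polynomial.eval_C, Polynomial.eval_X]
      field_simp
      ring

lemma abs_pow_mul_exp_le (t : ℝ) (ht : 0 < t) (m : ℕ) (x : ℝ) :
    |x| ^ m * Real.exp (-(x ^ 2) / (4 * t)) ≤ 1 + m.factorial * (4 * t) ^ m := by
  have hE1 : Real.exp (-(x ^ 2) / (4 * t)) ≤ 1 := by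
    rw [Real.exp_le_one_iff]
    have : 0 ≤ x ^ 2 / (4 * t) := by positivity
    linarith [neg_div (4*t) (x^2)]
  have hE0 : 0 < Real.exp (-(x ^ 2) / (4 * t)) := Real.exp_pos _
  have h1 : |x| ^ m ≤ 1 + (x ^ 2) ^ m := by
    rcases le_total (|x|) 1 with h | h
    · have := pow_le_one₀ (abs_nonneg x) h (n := m)
      nlinarith [pow_nonneg (sq_nonneg x) m]
    · have h2 : |x| ^ m ≤ (|x| ^ 2) ^ m := by
        rw [← pow_mul]
        exact pow_le_pow_right₀ h (by omega)
      rw [sq_abs] at h2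
      linarith
  have h2 : (x ^ 2) ^ m * Real.exp (-(x ^ 2) / (4 * t)) ≤ m.factorial * (4 * t) ^ m := by
    set u := x ^ 2 / (4 * t) with hu_def
    have hu : 0 ≤ u := by positivity
    have key : u ^ m / m.factorial ≤ Real.exp u := Real.pow_div_factorial_le_exp u hu m
    have hx2 : x ^ 2 = 4 * t * u := by rw [hu_def]; field_simp
    have hexp : Real.exp (-(x ^ 2) / (4 * t)) = (Real.exp u)⁻¹ := by
      rw [← Real.exp_neg]
      congr 1
      field_simp [hu_def]
      rw [hx2]
    rw [hexp, hx2, mul_pow]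
    rw [mul_assoc, mul_comm (u ^ m)]
    have : (Real.exp u)⁻¹ * u ^ m ≤ m.factorial := by
      rw [inv_mul_le_iff₀ (Real.exp_pos u)]
      have hf : (0:ℝ) < m.factorial := by positivity
      calc u ^ m = (u ^ m / m.factorial) * m.factorial := by field_simp
        _ ≤ Real.exp u * m.factorial :=
            mul_le_mul_of_nonneg_right key hf.le
    calc (4 * t) ^ m * ((Real.exp u)⁻¹ * u ^ m) ≤ (4 * t) ^ m * m.factorial :=
          mul_le_mul_of_nonneg_left this (by positivity)
      _ = m.factorial * (4 * t) ^ m := by ring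
  calc |x| ^ m * Real.exp (-(x ^ 2) / (4 * t))
      ≤ (1 + (x ^ 2) ^ m) * Real.exp (-(x ^ 2) / (4 * t)) :=
        mul_le_mul_of_nonneg_right h1 hE0.le
    _ = Real.exp (-(x ^ 2) / (4 * t)) + (x ^ 2) ^ m * Real.exp (-(x ^ 2) / (4 * t)) := by ring
    _ ≤ 1 + m.factorial * (4 * t) ^ m := add_le_add hE1 h2

lemma poly_weight_bound (t : ℝ) (ht : 0 < t) (p : Polynomial ℝ) (l : ℕ) :
    ∃ C : ℝ, ∀ x : ℝ, (1 + |x| ^ l) * |p.eval x| * Real.exp (-(x ^ 2) / (4 * t)) ≤ C := by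
  induction p using Polynomial.induction_on' with
  | add p q hp hq =>
      obtain ⟨Cp, hCp⟩ := hp
      obtain ⟨Cq, hCq⟩ := hq
      refine ⟨Cp + Cq, fun x => ?_⟩
      have h1 : |(p + q).eval x| ≤ |p.eval x| + |q.eval x| := by
        simpa using abs_add_le (p.eval x) (q.eval x)
      have h2 : (0:ℝ) < 1 + |x| ^ l := by positivity
      have h3 : (0:ℝ) < Real.exp (-(x ^ 2) / (4 * t)) := Real.exp_pos _
      calc (1 + |x| ^ l) * |(p + q).eval x| * Real.exp (-(x ^ 2) / (4 * t))
          ≤ (1 + |x| ^ l) * (|p.eval x| + |q.eval x|) * Real.exp (-(x ^ 2) / (4 * t)) :=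
            mul_le_mul_of_nonneg_right (mul_le_mul_of_nonneg_left h1 h2.le) h3.le
        _ = (1 + |x| ^ l) * |p.eval x| * Real.exp (-(x ^ 2) / (4 * t))
            + (1 + |x| ^ l) * |q.eval x| * Real.exp (-(x ^ 2) / (4 * t)) := by ring
        _ ≤ Cp + Cq := add_le_add (hCp x) (hCq x)
  | monomial n a =>
      refine ⟨|a| * ((1 + n.factorial * (4 * t) ^ n) + (1 + (l + n).factorial * (4 * t) ^ (l + n))),
        fun x => ?_⟩
      have h1 := abs_pow_mul_exp_le t ht n x
      have h2 := abs_pow_mul_exp_le t ht (l + n) x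
      have he : |(Polynomial.monomial n a).eval x| = |a| * |x| ^ n := by
        rw [Polynomial.eval_monomial, abs_mul, abs_pow]
      rw [he]
      have key : (1 + |x| ^ l) * (|a| * |x| ^ n) * Real.exp (-(x ^ 2) / (4 * t))
          = |a| * (|x| ^ n * Real.exp (-(x ^ 2) / (4 * t))
            + |x| ^ (l + n) * Real.exp (-(x ^ 2) / (4 * t))) := by
        rw [pow_add]; ring
      rw [key]
      have ha : (0:ℝ) ≤ |a| := abs_nonneg a
      nlinarith

lemma heatKernel_deriv_bound (t : ℝ) (ht : 0 < t) (k l : ℕ) :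
    ∃ C : ℝ, 0 ≤ C ∧ ∀ x : ℝ, (1 + |x| ^ l) * |iteratedDeriv k (heatKernel t) x| ≤ C := by
  obtain ⟨p, hp⟩ := heatKernel_struct t ht k
  obtain ⟨C, hC⟩ := poly_weight_bound t ht p l
  refine ⟨max C 0, le_max_right _ _, fun x => ?_⟩
  rw [hp x, abs_mul, abs_of_pos (Real.exp_pos _)]
  calc (1 + |x| ^ l) * (|p.eval x| * Real.exp (-(x ^ 2) / (4 * t)))
      = (1 + |x| ^ l) * |p.eval x| * Real.exp (-(x ^ 2) / (4 * t)) := by ring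
    _ ≤ C := hC x
    _ ≤ max C 0 := le_max_left _ _

/-- Global sup bound for iterated derivatives of the heat kernel. -/
lemma heatKernel_deriv_sup (t : ℝ) (ht : 0 < t) (k : ℕ) :
    ∃ C : ℝ, 0 ≤ C ∧ ∀ x : ℝ, |iteratedDeriv k (heatKernel t) x| ≤ C := by
  obtain ⟨C, hC0, hC⟩ := heatKernel_deriv_bound t ht k 0
  refine ⟨C, hC0, fun x => ?_⟩
  have := hC x
  have h1 : (1:ℝ) ≤ 1 + |x| ^ 0 := by simp
  nlinarith [abs_nonneg (iteratedDeriv k (heatKernel t) x)]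

section Fmach
variable {F : ℝ → ℝ}

lemma weight_triangle (l : ℕ) (x y : ℝ) :
    1 + |x| ^ l ≤ 2 ^ l * ((1 + |x - y| ^ l) * (1 + |y| ^ l)) := by
  set a := |x - y| with ha
  set b := |y| with hb
  have ha0 : 0 ≤ a := abs_nonneg _
  have hb0 : 0 ≤ b := abs_nonneg _
  have hx : |x| ≤ a + b := by
    calc |x| = |(x - y) + y| := by ring_nf
      _ ≤ a + b := abs_add_le _ _
  have h1 : |x| ^ l ≤ (a + b) ^ l := pow_le_pow_left₀ (abs_nonneg x) hx l
  have h2 : (a + b) ^ l ≤ 2 ^ l * (a ^ l + b ^ l) := by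
    have hm : a + b ≤ 2 * max a b := by
      rcases le_total a b with h | h
      · have := max_eq_right h; nlinarith
      · have := max_eq_left h; nlinarith
    calc (a + b) ^ l ≤ (2 * max a b) ^ l :=
          pow_le_pow_left₀ (by positivity) hm l
      _ = 2 ^ l * (max a b) ^ l := mul_pow 2 _ l
      _ ≤ 2 ^ l * (a ^ l + b ^ l) := by
          apply mul_le_mul_of_nonneg_left _ (by positivity)
          rcases le_total a b with h | h
          · rw [max_eq_right h]; nlinarith [pow_nonneg ha0 l]
          · rw [max_eq_left h]; nlinarith [pow_nonneg hb0 l]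
  have h3 : (1:ℝ) ≤ 2 ^ l := one_le_pow₀ (by norm_num)
  have h4 : 0 ≤ a ^ l := pow_nonneg ha0 l
  have h5 : 0 ≤ b ^ l := pow_nonneg hb0 l
  nlinarith [mul_nonneg h4 h5]

lemma decay_weight_integrable (hm : AEStronglyMeasurable F volume)
    (hd : ∀ l : ℕ, ∃ C : ℝ, ∀ y, (1 + |y| ^ l) * |F y| ≤ C) (l : ℕ) :
    Integrable (fun y => (1 + |y| ^ l) * |F y|) := by
  obtain ⟨C, hC⟩ := hd (l + 2)
  have habs : AEStronglyMeasurable (fun y : ℝ => |F y|) volume := by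
    simpa [Real.norm_eq_abs] using hm.norm
  have hcont : Continuous (fun y : ℝ => 1 + |y| ^ l) := by continuity
  apply Integrable.mono' ((integrable_inv_one_add_sq).const_mul (2 * C))
    (hcont.aestronglyMeasurable.mul habs)
  filter_upwards with y
  simp only [Pi.mul_apply]
  have hF0 : 0 ≤ |F y| := abs_nonneg _
  have hw0 : (0:ℝ) ≤ 1 + |y| ^ l := by positivity
  have hnorm : ‖(1 + |y| ^ l) * |F y|‖ = (1 + |y| ^ l) * |F y| :=
    abs_of_nonneg (mul_nonneg hw0 hF0)
  rw [hnorm]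
  have hy2 : (0:ℝ) < 1 + y ^ 2 := by positivity
  rw [show (2 * C * (1 + y ^ 2)⁻¹ : ℝ) = 2 * C / (1 + y ^ 2) by ring, le_div_iff₀ hy2]
  have key : (1 + |y| ^ l) * (1 + y ^ 2) ≤ 2 * (1 + |y| ^ (l + 2)) := by
    set a := |y| with ha
    have ha0 : 0 ≤ a := abs_nonneg _
    have hsq : y ^ 2 = a ^ 2 := (sq_abs y).symm
    have hfac : 0 ≤ (1 - a ^ 2) * (1 - a ^ l) := by
      rcases le_total a 1 with h | h
      · have h1 : a ^ 2 ≤ 1 := pow_le_one₀ ha0 h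
        have h2 : a ^ l ≤ 1 := pow_le_one₀ ha0 h
        nlinarith
      · have h1 : 1 ≤ a ^ 2 := one_le_pow₀ h
        have h2 : 1 ≤ a ^ l := one_le_pow₀ h
        nlinarith
    have hpa : a ^ (l + 2) = a ^ l * a ^ 2 := pow_add a l 2
    rw [hsq]
    nlinarith
  calc (1 + |y| ^ l) * |F y| * (1 + y ^ 2)
      = (1 + |y| ^ l) * (1 + y ^ 2) * |F y| := by ring
    _ ≤ 2 * (1 + |y| ^ (l + 2)) * |F y| :=
        mul_le_mul_of_nonneg_right key hF0
    _ = 2 * ((1 + |y| ^ (l + 2)) * |F y|) := by ring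
    _ ≤ 2 * C := by nlinarith [hC y]

lemma decay_abs_integrable (hm : AEStronglyMeasurable F volume)
    (hd : ∀ l : ℕ, ∃ C : ℝ, ∀ y, (1 + |y| ^ l) * |F y| ≤ C) :
    Integrable (fun y => |F y|) := by
  have h := decay_weight_integrable hm hd 0
  apply Integrable.mono' h (by simpa [Real.norm_eq_abs] using hm.norm)
  filter_upwards with y
  have hF0 : 0 ≤ |F y| := abs_nonneg _
  have : (1:ℝ) ≤ 1 + |y| ^ 0 := by simp
  rw [Real.norm_eq_abs, abs_abs]
  nlinarith

lemma integrable_bdd_mul_F (hm : AEStronglyMeasurable F volume)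
    (hd : ∀ l : ℕ, ∃ C : ℝ, ∀ y, (1 + |y| ^ l) * |F y| ≤ C)
    (G : ℝ → ℝ) (hG : Continuous G) (C : ℝ) (hGb : ∀ z, |G z| ≤ C) :
    Integrable (fun y => G y * F y) := by
  apply Integrable.mono' ((decay_abs_integrable hm hd).const_mul C)
    (hG.aestronglyMeasurable.mul hm)
  filter_upwards with y
  simp only [Pi.mul_apply]
  rw [Real.norm_eq_abs, abs_mul]
  exact mul_le_mul_of_nonneg_right (hGb y) (abs_nonneg _)

end Fmach

section Conv

noncomputable def conv (t : ℝ) (F : ℝ → ℝ) (x : ℝ) : ℝ :=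
  ∫ y, heatKernel t (x - y) * F y

variable {F : ℝ → ℝ}

lemma hk_cont (t : ℝ) (k : ℕ) : Continuous (iteratedDeriv k (heatKernel t)) :=
  (heatKernel_contDiff t).continuous_iteratedDeriv k (by exact_mod_cast le_top)

lemma hk_diff (t : ℝ) (k : ℕ) : Differentiable ℝ (iteratedDeriv k (heatKernel t)) :=
  (heatKernel_contDiff t).differentiable_iteratedDeriv k
    (by exact_mod_cast ENat.coe_lt_top k)

lemma conv_integrand_integrable (t : ℝ) (ht : 0 < t)
    (hm : AEStronglyMeasurable F volume)
    (hd : ∀ l : ℕ, ∃ C : ℝ, ∀ y, (1 + |y| ^ l) * |F y| ≤ C) (k : ℕ) (x : ℝ) :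
    Integrable (fun y => iteratedDeriv k (heatKernel t) (x - y) * F y) := by
  obtain ⟨C, hC0, hC⟩ := heatKernel_deriv_sup t ht k
  exact integrable_bdd_mul_F hm hd _
    ((hk_cont t k).comp (continuous_const.sub continuous_id)) C (fun z => hC _)

lemma conv_hasDerivAt (t : ℝ) (ht : 0 < t)
    (hm : AEStronglyMeasurable F volume)
    (hd : ∀ l : ℕ, ∃ C : ℝ, ∀ y, (1 + |y| ^ l) * |F y| ≤ C) (k : ℕ) (x : ℝ) :
    HasDerivAt (fun x' => ∫ y, iteratedDeriv k (heatKernel t) (x' - y) * F y)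
      (∫ y, iteratedDeriv (k + 1) (heatKernel t) (x - y) * F y) x := by
  obtain ⟨C, hC0, hC⟩ := heatKernel_deriv_sup t ht (k + 1)
  have hmeas : ∀ x' : ℝ, AEStronglyMeasurable
      (fun y => iteratedDeriv k (heatKernel t) (x' - y) * F y) volume := fun x' =>
    (((hk_cont t k).comp (continuous_const.sub continuous_id)).aestronglyMeasurable).mul hm
  have hmeas' : AEStronglyMeasurable
      (fun y => iteratedDeriv (k + 1) (heatKernel t) (x - y) * F y) volume :=
    (((hk_cont t (k + 1)).comp (continuous_const.sub continuous_id)).aestronglyMeasurable).mul hm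
  have h := hasDerivAt_integral_of_dominated_loc_of_deriv_le (μ := volume)
    (F := fun x' y => iteratedDeriv k (heatKernel t) (x' - y) * F y)
    (F' := fun x' y => iteratedDeriv (k + 1) (heatKernel t) (x' - y) * F y)
    (x₀ := x) (bound := fun y => C * |F y|) (s := Metric.ball x 1) (Metric.ball_mem_nhds x one_pos)
    (Filter.Eventually.of_forall hmeas)
    (conv_integrand_integrable t ht hm hd k x) hmeas'
    ?_ ((decay_abs_integrable hm hd).const_mul C) ?_
  · exact h.2
  · filter_upwards with y
    intro x' _
    rw [Real.norm_eq_abs, abs_mul]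
    exact mul_le_mul_of_nonneg_right (hC _) (abs_nonneg _)
  · filter_upwards with y
    intro x' _
    have h1 : HasDerivAt (fun x' : ℝ => x' - y) 1 x' := (hasDerivAt_id x').sub_const y
    have h2 : HasDerivAt (iteratedDeriv k (heatKernel t))
        (iteratedDeriv (k + 1) (heatKernel t) (x' - y)) (x' - y) := by
      rw [iteratedDeriv_succ]
      exact (hk_diff t k (x' - y)).hasDerivAt
    have h3 := h2.comp x' h1
    rw [mul_one] at h3
    exact h3.mul_const (F y)

lemma conv_iteratedDeriv (t : ℝ) (ht : 0 < t)
    (hm : AEStronglyMeasurable F volume)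
    (hd : ∀ l : ℕ, ∃ C : ℝ, ∀ y, (1 + |y| ^ l) * |F y| ≤ C) (k : ℕ) :
    iteratedDeriv k (conv t F) = fun x => ∫ y, iteratedDeriv k (heatKernel t) (x - y) * F y := by
  induction k with
  | zero => simp only [iteratedDeriv_zero]; rfl
  | succ k ih =>
      rw [iteratedDeriv_succ, ih]
      funext x
      exact (conv_hasDerivAt t ht hm hd k x).deriv

lemma conv_iteratedDeriv_differentiable (t : ℝ) (ht : 0 < t)
    (hm : AEStronglyMeasurable F volume)
    (hd : ∀ l : ℕ, ∃ C : ℝ, ∀ y, (1 + |y| ^ l) * |F y| ≤ C) (k : ℕ) :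
    Differentiable ℝ (iteratedDeriv k (conv t F)) := by
  rw [conv_iteratedDeriv t ht hm hd k]
  exact fun x => (conv_hasDerivAt t ht hm hd k x).differentiableAt

end Conv

noncomputable def heatKernelC (t : ℝ) (z : ℂ) : ℂ :=
  ((Real.sqrt (4 * Real.pi * t))⁻¹ : ℝ) * Complex.exp (-(z ^ 2) / (4 * (t : ℂ)))

lemma heatKernelC_hasDerivAt (t : ℝ) (ht : 0 < t) (z : ℂ) :
    HasDerivAt (heatKernelC t) (-(z / (2 * (t:ℂ))) * heatKernelC t z) z := by
  have h1 : HasDerivAt (fun z : ℂ => -(z ^ 2) / (4 * (t:ℂ))) (-(2 * z) / (4 * (t:ℂ))) z := by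
    simpa using ((hasDerivAt_pow 2 z).neg.div_const (4 * (t:ℂ)))
  have h2 := (h1.cexp).const_mul (((Real.sqrt (4 * Real.pi * t))⁻¹ : ℝ) : ℂ)
  refine h2.congr_deriv ?_
  unfold heatKernelC
  have htne : (t : ℂ) ≠ 0 := by exact_mod_cast ht.ne'
  field_simp
  ring

lemma heatKernelC_norm (t : ℝ) (ht : 0 < t) (z : ℂ) :
    ‖heatKernelC t z‖ = (Real.sqrt (4 * Real.pi * t))⁻¹
      * (Real.exp (z.im ^ 2 / (4 * t)) * Real.exp (-(z.re ^ 2) / (4 * t))) := by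
  unfold heatKernelC
  rw [norm_mul, Complex.norm_real, Real.norm_eq_abs,
    Complex.norm_exp, abs_of_nonneg (by positivity : (0:ℝ) ≤ (Real.sqrt (4 * Real.pi * t))⁻¹)]
  congr 1
  have h4 : (4 * (t:ℂ)) = ((4 * t : ℝ) : ℂ) := by push_cast; ring
  have hre : (-(z ^ 2) / (4 * (t:ℂ))).re = (z.im ^ 2 - z.re ^ 2) / (4 * t) := by
    rw [h4, Complex.div_ofReal_re]
    congr 1
    simp [pow_two, Complex.mul_re]
    try ring
  rw [hre, ← Real.exp_add]
  congr 1
  field_simp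
  ring

lemma heatKernelC_bound (t : ℝ) (ht : 0 < t) (m : ℝ) (hm : 0 ≤ m) :
    ∃ B : ℝ, 0 ≤ B ∧ ∀ z : ℂ, |z.im| ≤ m →
      ‖heatKernelC t z‖ ≤ B ∧ ‖-(z / (2 * (t:ℂ))) * heatKernelC t z‖ ≤ B := by
  set c := (Real.sqrt (4 * Real.pi * t))⁻¹ with hc
  have hc0 : 0 ≤ c := by positivity
  set E := Real.exp (m ^ 2 / (4 * t)) with hE
  have hE0 : 0 < E := Real.exp_pos _
  refine ⟨max (c * E) (c * E * (1 + 4 * t + m) / (2 * t)) + 1, by positivity, fun z hz => ?_⟩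
  have him : Real.exp (z.im ^ 2 / (4 * t)) ≤ E := by
    apply Real.exp_le_exp.2
    have : z.im ^ 2 ≤ m ^ 2 := by nlinarith [abs_nonneg z.im, sq_abs z.im, neg_abs_le z.im]
    apply div_le_div_of_nonneg_right this (by positivity) |>.trans_eq rfl
  have hexp1 : Real.exp (-(z.re ^ 2) / (4 * t)) ≤ 1 := by
    rw [Real.exp_le_one_iff]
    have : 0 ≤ z.re ^ 2 / (4 * t) := by positivity
    linarith [neg_div (4 * t) (z.re ^ 2)]
  have hexp0 : 0 < Real.exp (-(z.re ^ 2) / (4 * t)) := Real.exp_pos _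
  have hK : ‖heatKernelC t z‖ ≤ c * E := by
    rw [heatKernelC_norm t ht z]
    calc c * (Real.exp (z.im ^ 2 / (4 * t)) * Real.exp (-(z.re ^ 2) / (4 * t)))
        ≤ c * (E * 1) := by
          apply mul_le_mul_of_nonneg_left _ hc0
          exact mul_le_mul him hexp1 hexp0.le hE0.le
      _ = c * E := by ring
  constructor
  · linarith [le_max_left (c * E) (c * E * (1 + 4 * t + m) / (2 * t))]
  · rw [norm_mul, norm_neg, norm_div]
    have hzn : ‖z‖ ≤ |z.re| + m := by
      calc ‖z‖ ≤ |z.re| + |z.im| := by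
            simpa using Complex.norm_le_abs_re_add_abs_im z
        _ ≤ |z.re| + m := by linarith
    have h2t : ‖(2 * (t:ℂ))‖ = 2 * t := by
      rw [show (2 * (t:ℂ)) = ((2 * t : ℝ) : ℂ) by push_cast; ring]
      rw [Complex.norm_real, Real.norm_eq_abs, abs_of_pos (by linarith)]
    rw [h2t, heatKernelC_norm t ht z]
    have habs1 : |z.re| * Real.exp (-(z.re ^ 2) / (4 * t)) ≤ 1 + 4 * t := by
      have := abs_pow_mul_exp_le t ht 1 z.re
      simpa using this
    have key : ‖z‖ * (c * (Real.exp (z.im ^ 2 / (4 * t)) * Real.exp (-(z.re ^ 2) / (4 * t))))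
        ≤ c * E * (1 + 4 * t + m) := by
      calc ‖z‖ * (c * (Real.exp (z.im ^ 2 / (4 * t)) * Real.exp (-(z.re ^ 2) / (4 * t))))
          ≤ (|z.re| + m) * (c * (E * Real.exp (-(z.re ^ 2) / (4 * t)))) := by
            apply mul_le_mul hzn _ (by positivity) (by positivity)
            exact mul_le_mul_of_nonneg_left
              (mul_le_mul_of_nonneg_right him hexp0.le) hc0
        _ = c * E * (|z.re| * Real.exp (-(z.re ^ 2) / (4 * t)))
            + c * E * (m * Real.exp (-(z.re ^ 2) / (4 * t))) := by ring
        _ ≤ c * E * (1 + 4 * t) + c * E * (m * 1) := by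
            apply add_le_add
            · exact mul_le_mul_of_nonneg_left habs1 (by positivity)
            · apply mul_le_mul_of_nonneg_left _ (by positivity)
              exact mul_le_mul_of_nonneg_left hexp1 hm
        _ = c * E * (1 + 4 * t + m) := by ring
    have h2tpos : (0:ℝ) < 2 * t := by linarith
    calc ‖z‖ / (2 * t) * (c * (Real.exp (z.im ^ 2 / (4 * t)) * Real.exp (-(z.re ^ 2) / (4 * t))))
        = ‖z‖ * (c * (Real.exp (z.im ^ 2 / (4 * t)) * Real.exp (-(z.re ^ 2) / (4 * t)))) / (2 * t) := by
          ring
      _ ≤ c * E * (1 + 4 * t + m) / (2 * t) := by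
          apply div_le_div_of_nonneg_right key h2tpos.le |>.trans_eq rfl
      _ ≤ max (c * E) (c * E * (1 + 4 * t + m) / (2 * t)) + 1 := by
          linarith [le_max_right (c * E) (c * E * (1 + 4 * t + m) / (2 * t))]

section ConvC
variable {F : ℝ → ℝ}

noncomputable def convC (t : ℝ) (F : ℝ → ℝ) (z : ℂ) : ℂ :=
  ∫ y : ℝ, heatKernelC t (z - y) * (F y : ℂ)

lemma heatKernelC_continuous (t : ℝ) : Continuous (heatKernelC t) := by
  unfold heatKernelC
  exact continuous_const.mul (((continuous_pow 2).neg.div_const _).cexp)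

lemma convC_integrand_integrable (t : ℝ) (ht : 0 < t)
    (hm : AEStronglyMeasurable F volume)
    (hd : ∀ l : ℕ, ∃ C : ℝ, ∀ y, (1 + |y| ^ l) * |F y| ≤ C) (z : ℂ) :
    Integrable (fun y : ℝ => heatKernelC t (z - y) * (F y : ℂ)) := by
  obtain ⟨B, hB0, hB⟩ := heatKernelC_bound t ht |z.im| (abs_nonneg _)
  have hmc : AEStronglyMeasurable (fun y : ℝ => (F y : ℂ)) volume :=
    Complex.continuous_ofReal.comp_aestronglyMeasurable hm
  have hcont : Continuous (fun y : ℝ => heatKernelC t (z - y)) :=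
    (heatKernelC_continuous t).comp (continuous_const.sub Complex.continuous_ofReal)
  apply Integrable.mono' (((decay_abs_integrable hm hd).const_mul B))
    (hcont.aestronglyMeasurable.mul hmc)
  filter_upwards with y
  simp only [Pi.mul_apply]
  rw [norm_mul]
  have him : ((z - (y:ℂ))).im = z.im := by simp
  have h1 := (hB (z - y) (by rw [him])).1
  have h2 : ‖(F y : ℂ)‖ = |F y| := by rw [Complex.norm_real, Real.norm_eq_abs]
  rw [h2]
  exact mul_le_mul_of_nonneg_right h1 (abs_nonneg _)

lemma convC_differentiable (t : ℝ) (ht : 0 < t)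
    (hm : AEStronglyMeasurable F volume)
    (hd : ∀ l : ℕ, ∃ C : ℝ, ∀ y, (1 + |y| ^ l) * |F y| ≤ C) :
    Differentiable ℂ (convC t F) := by
  intro z₀
  obtain ⟨B, hB0, hB⟩ := heatKernelC_bound t ht (|z₀.im| + 1) (by positivity)
  have hmc : AEStronglyMeasurable (fun y : ℝ => (F y : ℂ)) volume :=
    Complex.continuous_ofReal.comp_aestronglyMeasurable hm
  have hmeas : ∀ z : ℂ, AEStronglyMeasurable
      (fun y : ℝ => heatKernelC t (z - y) * (F y : ℂ)) volume := fun z =>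
    (((heatKernelC_continuous t).comp
      (continuous_const.sub Complex.continuous_ofReal)).aestronglyMeasurable).mul hmc
  have hmeas' : AEStronglyMeasurable
      (fun y : ℝ => -((z₀ - y) / (2 * (t:ℂ))) * heatKernelC t (z₀ - y) * (F y : ℂ)) volume := by
    apply AEStronglyMeasurable.mul _ hmc
    apply Continuous.aestronglyMeasurable
    have : Continuous (fun y : ℝ => z₀ - (y:ℂ)) := continuous_const.sub Complex.continuous_ofReal
    exact ((this.div_const _).neg).mul ((heatKernelC_continuous t).comp this)
  have h := hasDerivAt_integral_of_dominated_loc_of_deriv_le (μ := volume) (𝕜 := ℂ)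
    (F := fun z y => heatKernelC t (z - y) * (F y : ℂ))
    (F' := fun z y => -((z - y) / (2 * (t:ℂ))) * heatKernelC t (z - y) * (F y : ℂ))
    (x₀ := z₀) (bound := fun y => B * |F y|) (s := Metric.ball z₀ 1) (Metric.ball_mem_nhds z₀ one_pos)
    (Filter.Eventually.of_forall hmeas)
    (convC_integrand_integrable t ht hm hd z₀) hmeas'
    ?_ ((decay_abs_integrable hm hd).const_mul B) ?_
  · exact h.2.differentiableAt
  · filter_upwards with y
    intro z hz
    have him : |(z - (y:ℂ)).im| ≤ |z₀.im| + 1 := by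
      have h1 : (z - (y:ℂ)).im = z.im := by simp
      rw [h1]
      have h2 : |z.im - z₀.im| ≤ ‖z - z₀‖ := by
        simpa [Complex.sub_im] using Complex.abs_im_le_norm (z - z₀)
      have h3 : ‖z - z₀‖ < 1 := by simpa [dist_eq_norm] using Metric.mem_ball.1 hz
      have := abs_sub_abs_le_abs_sub z.im z₀.im
      have h4 : |z.im| ≤ |z.im - z₀.im| + |z₀.im| := by
        have := abs_sub_le z.im z₀.im 0
        simpa using this
      linarith
    have h1 := (hB (z - y) him).2
    rw [norm_mul]
    have h2 : ‖(F y : ℂ)‖ = |F y| := by rw [Complex.norm_real, Real.norm_eq_abs]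
    rw [h2]
    exact mul_le_mul_of_nonneg_right h1 (abs_nonneg _)
  · filter_upwards with y
    intro z hz
    have h1 : HasDerivAt (fun z : ℂ => z - (y:ℂ)) 1 z := (hasDerivAt_id z).sub_const _
    have h2 := (heatKernelC_hasDerivAt t ht (z - y)).comp z h1
    rw [mul_one] at h2
    exact h2.mul_const ((F y : ℂ))

lemma conv_eq_re (t : ℝ) (x : ℝ) : conv t F x = (convC t F (x : ℂ)).re := by
  unfold conv convC
  have key : ∀ y : ℝ, heatKernelC t ((x:ℂ) - y) * (F y : ℂ)
      = ((heatKernel t (x - y) * F y : ℝ) : ℂ) := by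
    intro y
    unfold heatKernelC heatKernel
    push_cast [Complex.ofReal_exp]
    ring
  simp only [key]
  rw [show (∫ y : ℝ, ((heatKernel t (x - y) * F y : ℝ) : ℂ))
      = ((∫ y : ℝ, heatKernel t (x - y) * F y : ℝ) : ℂ) from integral_ofReal,
    Complex.ofReal_re]

lemma conv_analyticAt (t : ℝ) (ht : 0 < t)
    (hm : AEStronglyMeasurable F volume)
    (hd : ∀ l : ℕ, ∃ C : ℝ, ∀ y, (1 + |y| ^ l) * |F y| ≤ C) (x : ℝ) :
    AnalyticAt ℝ (conv t F) x := by
  have h1 : AnalyticAt ℂ (convC t F) ((x:ℝ) : ℂ) :=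
    (convC_differentiable t ht hm hd).analyticAt _
  have h2 : AnalyticAt ℝ (fun x : ℝ => (Complex.reCLM) ((convC t F) (Complex.ofRealCLM x))) x :=
    (Complex.reCLM.analyticAt _).comp ((h1.restrictScalars).comp (Complex.ofRealCLM.analyticAt x))
  have heq : conv t F = fun x : ℝ => (Complex.reCLM) ((convC t F) (Complex.ofRealCLM x)) := by
    funext u
    exact conv_eq_re t u
  rw [heq]
  exact h2

end ConvC

section ConvMore
variable {F : ℝ → ℝ}

lemma conv_decay (t : ℝ) (ht : 0 < t)
    (hm : AEStronglyMeasurable F volume)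
    (hd : ∀ l : ℕ, ∃ C : ℝ, ∀ y, (1 + |y| ^ l) * |F y| ≤ C) (k l : ℕ) :
    ∃ C : ℝ, ∀ x : ℝ, (1 + |x| ^ l) * |iteratedDeriv k (conv t F) x| ≤ C := by
  obtain ⟨C1, hC10, hC1⟩ := heatKernel_deriv_bound t ht k l
  have hwint := decay_weight_integrable hm hd l
  refine ⟨2 ^ l * C1 * ∫ y, (1 + |y| ^ l) * |F y|, fun x => ?_⟩
  rw [conv_iteratedDeriv t ht hm hd k]
  have hx0 : (0:ℝ) ≤ 1 + |x| ^ l := by positivity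
  have hint := conv_integrand_integrable t ht hm hd k x
  calc (1 + |x| ^ l) * |∫ y, iteratedDeriv k (heatKernel t) (x - y) * F y|
      ≤ (1 + |x| ^ l) * ∫ y, |iteratedDeriv k (heatKernel t) (x - y)| * |F y| := by
        apply mul_le_mul_of_nonneg_left _ hx0
        simpa [Real.norm_eq_abs, abs_mul] using norm_integral_le_integral_norm
          (fun y => iteratedDeriv k (heatKernel t) (x - y) * F y)
    _ = ∫ y, (1 + |x| ^ l) * (|iteratedDeriv k (heatKernel t) (x - y)| * |F y|) :=
        (integral_const_mul _ _).symm
    _ ≤ ∫ y, 2 ^ l * C1 * ((1 + |y| ^ l) * |F y|) := by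
        have habsint : Integrable (fun y => |iteratedDeriv k (heatKernel t) (x - y)| * |F y|) := by
          have := hint.abs
          simpa [abs_mul] using this
        apply integral_mono (habsint.const_mul _) (hwint.const_mul _)
        intro y
        dsimp only
        set A := |iteratedDeriv k (heatKernel t) (x - y)| with hA
        set B := |F y| with hB
        have hA0 : 0 ≤ A := abs_nonneg _
        have hB0 : 0 ≤ B := abs_nonneg _
        have h1 := weight_triangle l x y
        have h2 := hC1 (x - y)
        calc (1 + |x| ^ l) * (A * B)
            ≤ (2 ^ l * ((1 + |x - y| ^ l) * (1 + |y| ^ l))) * (A * B) :=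
              mul_le_mul_of_nonneg_right h1 (mul_nonneg hA0 hB0)
          _ = 2 ^ l * (1 + |y| ^ l) * B * ((1 + |x - y| ^ l) * A) := by ring
          _ ≤ 2 ^ l * (1 + |y| ^ l) * B * C1 := by
              apply mul_le_mul_of_nonneg_left h2 (by positivity)
          _ = 2 ^ l * C1 * ((1 + |y| ^ l) * B) := by ring
    _ = 2 ^ l * C1 * ∫ y, (1 + |y| ^ l) * |F y| := integral_const_mul _ _

lemma conv_even (t : ℝ) (hFe : ∀ y, F (-y) = F y) (x : ℝ) :
    conv t F (-x) = conv t F x := by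
  unfold conv
  have h1 : (fun y : ℝ => heatKernel t (-x - y) * F y)
      = fun y : ℝ => (fun y : ℝ => heatKernel t (x - y) * F y) (-y) := by
    funext y
    have h2 : heatKernel t (x - -y) = heatKernel t (-x - y) := by
      rw [show (x - -y : ℝ) = -(-x - y) by ring, heatKernel_even]
    dsimp only
    rw [hFe, h2]
  rw [h1]
  exact integral_neg_eq_self (fun y : ℝ => heatKernel t (x - y) * F y) volume

lemma conv_odd_iteratedDeriv_zero (t : ℝ) (hFe : ∀ y, F (-y) = F y) (k : ℕ) :
    iteratedDeriv (2 * k + 1) (conv t F) 0 = 0 := by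
  have heven : (fun x : ℝ => conv t F (-x)) = conv t F := funext (conv_even t hFe)
  have h := iteratedDeriv_comp_neg (2 * k + 1) (conv t F) 0
  rw [heven, neg_zero] at h
  have hpow : ((-1 : ℝ)) ^ (2 * k + 1) = -1 := Odd.neg_one_pow ⟨k, by ring⟩
  rw [hpow] at h
  have : iteratedDeriv (2 * k + 1) (conv t F) 0
      = -iteratedDeriv (2 * k + 1) (conv t F) 0 := by
    simpa using h
  linarith

end ConvMore

section Bridge
variable {t : ℝ} {H : ℝ → ℝ}

lemma heatKernel_bdd (t : ℝ) (ht : 0 < t) : ∃ C : ℝ, 0 ≤ C ∧ ∀ x, |heatKernel t x| ≤ C := by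
  obtain ⟨C, hC0, hC⟩ := heatKernel_deriv_sup t ht 0
  exact ⟨C, hC0, fun x => by simpa [iteratedDeriv_zero] using hC x⟩

/-- Identification on the right half line. -/
lemma neumann_eq_conv_pos (ht : 0 < t)
    (hm : AEStronglyMeasurable (fun y : ℝ => H |y|) volume)
    (hd : ∀ l : ℕ, ∃ C : ℝ, ∀ y, (1 + |y| ^ l) * |H (|y|)| ≤ C)
    {x : ℝ} (hx : 0 < x) :
    neumannSemigroup t H x = conv t (fun y : ℝ => H |y|) x := by
  obtain ⟨CK, hCK0, hCK⟩ := heatKernel_bdd t ht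
  have hint1 : Integrable (fun y : ℝ => heatKernel t (x - y) * H |y|) :=
    integrable_bdd_mul_F hm hd (fun y => heatKernel t (x - y))
      ((heatKernel_contDiff t).continuous.comp (continuous_const.sub continuous_id))
      CK (fun z => hCK _)
  have hint2 : Integrable (fun y : ℝ => heatKernel t (x + y) * H |y|) :=
    integrable_bdd_mul_F hm hd (fun y => heatKernel t (x + y))
      ((heatKernel_contDiff t).continuous.comp (continuous_const.add continuous_id))
      CK (fun z => hCK _)
  have hsign : Real.sign x = 1 := Real.sign_of_pos hx
  have i1 : IntegrableOn (fun y : ℝ => heatKernel t (x - y) * H y) (Ioi 0) :=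
    (hint1.integrableOn).congr_fun
      (fun y hy => by dsimp only; rw [abs_of_pos (mem_Ioi.1 hy)]) measurableSet_Ioi
  have i2 : IntegrableOn (fun y : ℝ => heatKernel t (x + y) * H y) (Ioi 0) :=
    (hint2.integrableOn).congr_fun
      (fun y hy => by dsimp only; rw [abs_of_pos (mem_Ioi.1 hy)]) measurableSet_Ioi
  have step1 : neumannSemigroup t H x
      = (∫ y in Ioi (0:ℝ), heatKernel t (x - y) * H y)
        + ∫ y in Ioi (0:ℝ), heatKernel t (x + y) * H y := by
    unfold neumannSemigroup
    rw [show (∫ y in Ioi (0:ℝ), (heatKernel t (x - y) + heatKernel t (x + y)) * H (y * Real.sign x))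
        = ∫ y in Ioi (0:ℝ), (heatKernel t (x - y) * H y + heatKernel t (x + y) * H y) from by
      apply setIntegral_congr_fun measurableSet_Ioi
      intro y hy
      dsimp only
      rw [hsign, mul_one]
      ring]
    exact integral_add i1 i2
  have step2 : conv t (fun y : ℝ => H |y|) x
      = (∫ y in Iic (0:ℝ), heatKernel t (x - y) * H |y|)
        + ∫ y in Ioi (0:ℝ), heatKernel t (x - y) * H |y| := by
    unfold conv
    exact (intervalIntegral.integral_Iic_add_Ioi hint1.integrableOn hint1.integrableOn).symm
  have step3 : (∫ y in Iic (0:ℝ), heatKernel t (x - y) * H |y|)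
      = ∫ y in Ioi (0:ℝ), heatKernel t (x + y) * H y := by
    have hcomp : (∫ y in Iic (0:ℝ),
        (fun z : ℝ => heatKernel t (x + z) * H |z|) (-y))
        = ∫ z in Ioi (-(0:ℝ)), heatKernel t (x + z) * H |z| :=
      integral_comp_neg_Iic (0:ℝ) (fun z : ℝ => heatKernel t (x + z) * H |z|)
    rw [neg_zero] at hcomp
    have heq : (∫ y in Iic (0:ℝ), heatKernel t (x - y) * H |y|)
        = ∫ y in Iic (0:ℝ), (fun z : ℝ => heatKernel t (x + z) * H |z|) (-y) := by
      apply setIntegral_congr_fun measurableSet_Iic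
      intro y _
      dsimp only
      rw [abs_neg, show x + -y = x - y by ring]
    rw [heq, hcomp]
    apply setIntegral_congr_fun measurableSet_Ioi
    intro y hy
    dsimp only
    rw [abs_of_pos (mem_Ioi.1 hy)]
  have step4 : (∫ y in Ioi (0:ℝ), heatKernel t (x - y) * H |y|)
      = ∫ y in Ioi (0:ℝ), heatKernel t (x - y) * H y := by
    apply setIntegral_congr_fun measurableSet_Ioi
    intro y hy
    dsimp only
    rw [abs_of_pos (mem_Ioi.1 hy)]
  rw [step1, step2, step3, step4]
  ring

/-- Identification on the left half line. -/
lemma neumann_eq_conv_neg (ht : 0 < t)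
    (hm : AEStronglyMeasurable (fun y : ℝ => H (-|y|)) volume)
    (hd : ∀ l : ℕ, ∃ C : ℝ, ∀ y, (1 + |y| ^ l) * |H (-|y|)| ≤ C)
    {x : ℝ} (hx : x < 0) :
    neumannSemigroup t H x = conv t (fun y : ℝ => H (-|y|)) x := by
  obtain ⟨CK, hCK0, hCK⟩ := heatKernel_bdd t ht
  have hint1 : Integrable (fun y : ℝ => heatKernel t (x - y) * H (-|y|)) :=
    integrable_bdd_mul_F hm hd (fun y => heatKernel t (x - y))
      ((heatKernel_contDiff t).continuous.comp (continuous_const.sub continuous_id))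
      CK (fun z => hCK _)
  have hint2 : Integrable (fun y : ℝ => heatKernel t (x + y) * H (-|y|)) :=
    integrable_bdd_mul_F hm hd (fun y => heatKernel t (x + y))
      ((heatKernel_contDiff t).continuous.comp (continuous_const.add continuous_id))
      CK (fun z => hCK _)
  have hsign : Real.sign x = -1 := Real.sign_of_neg hx
  have i1 : IntegrableOn (fun y : ℝ => heatKernel t (x - y) * H (-y)) (Ioi 0) :=
    (hint1.integrableOn).congr_fun
      (fun y hy => by dsimp only; rw [abs_of_pos (mem_Ioi.1 hy)]) measurableSet_Ioi
  have i2 : IntegrableOn (fun y : ℝ => heatKernel t (x + y) * H (-y)) (Ioi 0) :=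
    (hint2.integrableOn).congr_fun
      (fun y hy => by dsimp only; rw [abs_of_pos (mem_Ioi.1 hy)]) measurableSet_Ioi
  have step1 : neumannSemigroup t H x
      = (∫ y in Ioi (0:ℝ), heatKernel t (x - y) * H (-y))
        + ∫ y in Ioi (0:ℝ), heatKernel t (x + y) * H (-y) := by
    unfold neumannSemigroup
    rw [show (∫ y in Ioi (0:ℝ), (heatKernel t (x - y) + heatKernel t (x + y)) * H (y * Real.sign x))
        = ∫ y in Ioi (0:ℝ), (heatKernel t (x - y) * H (-y) + heatKernel t (x + y) * H (-y)) from by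
      apply setIntegral_congr_fun measurableSet_Ioi
      intro y hy
      dsimp only
      rw [hsign, show y * (-1:ℝ) = -y by ring]
      ring]
    exact integral_add i1 i2
  have step2 : conv t (fun y : ℝ => H (-|y|)) x
      = (∫ y in Iic (0:ℝ), heatKernel t (x - y) * H (-|y|))
        + ∫ y in Ioi (0:ℝ), heatKernel t (x - y) * H (-|y|) := by
    unfold conv
    exact (intervalIntegral.integral_Iic_add_Ioi hint1.integrableOn hint1.integrableOn).symm
  have step3 : (∫ y in Iic (0:ℝ), heatKernel t (x - y) * H (-|y|))
      = ∫ y in Ioi (0:ℝ), heatKernel t (x + y) * H (-y) := by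
    have hcomp : (∫ y in Iic (0:ℝ),
        (fun z : ℝ => heatKernel t (x + z) * H (-|z|)) (-y))
        = ∫ z in Ioi (-(0:ℝ)), heatKernel t (x + z) * H (-|z|) :=
      integral_comp_neg_Iic (0:ℝ) (fun z : ℝ => heatKernel t (x + z) * H (-|z|))
    rw [neg_zero] at hcomp
    have heq : (∫ y in Iic (0:ℝ), heatKernel t (x - y) * H (-|y|))
        = ∫ y in Iic (0:ℝ), (fun z : ℝ => heatKernel t (x + z) * H (-|z|)) (-y) := by
      apply setIntegral_congr_fun measurableSet_Iic
      intro y _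
      dsimp only
      rw [abs_neg, show x + -y = x - y by ring]
    rw [heq, hcomp]
    apply setIntegral_congr_fun measurableSet_Ioi
    intro y hy
    dsimp only
    rw [abs_of_pos (mem_Ioi.1 hy)]
  have step4 : (∫ y in Ioi (0:ℝ), heatKernel t (x - y) * H (-|y|))
      = ∫ y in Ioi (0:ℝ), heatKernel t (x - y) * H (-y) := by
    apply setIntegral_congr_fun measurableSet_Ioi
    intro y hy
    dsimp only
    rw [abs_of_pos (mem_Ioi.1 hy)]
  rw [step1, step2, step3, step4]
  ring

end Bridge

section Final
variable {H : ℝ → ℝ}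

lemma Fplus_aesm (hc : ContinuousOn H {0}ᶜ) :
    AEStronglyMeasurable (fun y : ℝ => H |y|) volume := by
  have : Measurable fun y : ℝ => H |y| := by
    apply measurable_of_continuousOn_compl_singleton 0
    apply hc.comp continuous_abs.continuousOn
    intro y hy
    simp only [mem_compl_iff, mem_singleton_iff] at *
    exact abs_ne_zero.2 hy
  exact this.aestronglyMeasurable

lemma Fminus_aesm (hc : ContinuousOn H {0}ᶜ) :
    AEStronglyMeasurable (fun y : ℝ => H (-|y|)) volume := by
  have : Measurable fun y : ℝ => H (-|y|) := by
    apply measurable_of_continuousOn_compl_singleton 0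
    apply hc.comp (continuous_abs.neg.continuousOn)
    intro y hy
    simp only [mem_compl_iff, mem_singleton_iff] at *
    simpa using hy
  exact this.aestronglyMeasurable

lemma Fplus_decay (hd : ∀ l : ℕ, ∃ C : ℝ, ∀ u : ℝ, u ≠ 0 → |(1 + |u| ^ l) * H u| ≤ C)
    (l : ℕ) : ∃ C : ℝ, ∀ y : ℝ, (1 + |y| ^ l) * |H (|y|)| ≤ C := by
  obtain ⟨C, hC⟩ := hd l
  refine ⟨max C ((1 + |(0:ℝ)| ^ l) * |H 0|), fun y => ?_⟩
  by_cases hy : y = 0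
  · subst hy
    simp only [abs_zero]
    exact le_max_right _ _
  · have h1 := hC (|y|) (abs_ne_zero.2 hy)
    rw [abs_mul, abs_abs, abs_of_pos (by positivity : (0:ℝ) < 1 + |y| ^ l)] at h1
    exact le_trans h1 (le_max_left _ _)

lemma Fminus_decay (hd : ∀ l : ℕ, ∃ C : ℝ, ∀ u : ℝ, u ≠ 0 → |(1 + |u| ^ l) * H u| ≤ C)
    (l : ℕ) : ∃ C : ℝ, ∀ y : ℝ, (1 + |y| ^ l) * |H (-|y|)| ≤ C := by
  obtain ⟨C, hC⟩ := hd l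
  refine ⟨max C ((1 + |(0:ℝ)| ^ l) * |H 0|), fun y => ?_⟩
  by_cases hy : y = 0
  · subst hy
    simp only [abs_zero, neg_zero]
    exact le_max_right _ _
  · have h1 := hC (-|y|) (by simpa using hy)
    rw [abs_mul, abs_neg, abs_abs, abs_of_pos (by positivity : (0:ℝ) < 1 + |y| ^ l)] at h1
    exact le_trans h1 (le_max_left _ _)

end Final


/-- If `H` is in the test space `S_β(ℝ)` for `β > 1` (smooth away from `0`,
with all weighted derivative sups finite, and all odd-order one-sided derivatives
vanishing at `0`), then so is `T_t^{Neu} H` for every `t > 0`. -/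
theorem stmt_1 (t : ℝ) (ht : 0 < t) (H : ℝ → ℝ)
    (hH_smooth : ContDiffOn ℝ (⊤ : ℕ∞) H {0}ᶜ)
    (hH_decay : ∀ k ℓ : ℕ, ∃ C : ℝ, ∀ u : ℝ, u ≠ 0 →
      |(1 + |u| ^ ℓ) * iteratedDeriv k H u| ≤ C)
    (hH_bc : ∀ k : ℕ,
      Tendsto (iteratedDeriv (2 * k + 1) H) (𝓝[>] (0 : ℝ)) (𝓝 0) ∧
      Tendsto (iteratedDeriv (2 * k + 1) H) (𝓝[<] (0 : ℝ)) (𝓝 0)) :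
    ContDiffOn ℝ (⊤ : ℕ∞) (neumannSemigroup t H) {0}ᶜ ∧
    (∀ k ℓ : ℕ, ∃ C : ℝ, ∀ u : ℝ, u ≠ 0 →
      |(1 + |u| ^ ℓ) * iteratedDeriv k (neumannSemigroup t H) u| ≤ C) ∧
    (∀ k : ℕ,
      Tendsto (iteratedDeriv (2 * k + 1) (neumannSemigroup t H)) (𝓝[>] (0 : ℝ)) (𝓝 0) ∧
      Tendsto (iteratedDeriv (2 * k + 1) (neumannSemigroup t H)) (𝓝[<] (0 : ℝ)) (𝓝 0)) := by
  have hHc : ContinuousOn H {0}ᶜ := hH_smooth.continuousOn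
  have hdH : ∀ l : ℕ, ∃ C : ℝ, ∀ u : ℝ, u ≠ 0 → |(1 + |u| ^ l) * H u| ≤ C := by
    intro l
    obtain ⟨C, hC⟩ := hH_decay 0 l
    exact ⟨C, fun u hu => by simpa [iteratedDeriv_zero] using hC u hu⟩
  have hmp : AEStronglyMeasurable (fun y : ℝ => H |y|) volume := Fplus_aesm hHc
  have hmn : AEStronglyMeasurable (fun y : ℝ => H (-|y|)) volume := Fminus_aesm hHc
  have hdp : ∀ l : ℕ, ∃ C : ℝ, ∀ y : ℝ, (1 + |y| ^ l) * |H (|y|)| ≤ C := Fplus_decay hdH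
  have hdn : ∀ l : ℕ, ∃ C : ℝ, ∀ y : ℝ, (1 + |y| ^ l) * |H (-|y|)| ≤ C := Fminus_decay hdH
  have hevp : ∀ y : ℝ, H |(-y)| = H |y| := fun y => by rw [abs_neg]
  have hevn : ∀ y : ℝ, H (-|(-y)|) = H (-|y|) := fun y => by rw [abs_neg]
  have hnbp : ∀ {x : ℝ}, 0 < x →
      neumannSemigroup t H =ᶠ[𝓝 x] conv t (fun y : ℝ => H |y|) := fun {x} hx =>
    Filter.eventuallyEq_of_mem (isOpen_Ioi.mem_nhds hx)
      (fun u hu => neumann_eq_conv_pos ht hmp hdp (mem_Ioi.1 hu))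
  have hnbn : ∀ {x : ℝ}, x < 0 →
      neumannSemigroup t H =ᶠ[𝓝 x] conv t (fun y : ℝ => H (-|y|)) := fun {x} hx =>
    Filter.eventuallyEq_of_mem (isOpen_Iio.mem_nhds hx)
      (fun u hu => neumann_eq_conv_neg ht hmn hdn (mem_Iio.1 hu))
  have hDeqp : ∀ (k : ℕ) (x : ℝ), 0 < x → iteratedDeriv k (neumannSemigroup t H) x
      = iteratedDeriv k (conv t (fun y : ℝ => H |y|)) x :=
    fun k x hx => (hnbp hx).iteratedDeriv_eq k
  have hDeqn : ∀ (k : ℕ) (x : ℝ), x < 0 → iteratedDeriv k (neumannSemigroup t H) x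
      = iteratedDeriv k (conv t (fun y : ℝ => H (-|y|))) x :=
    fun k x hx => (hnbn hx).iteratedDeriv_eq k
  refine ⟨?_, ?_, ?_⟩
  · -- smoothness (analyticity)
    intro x hx
    have hx0 : x ≠ 0 := hx
    rcases lt_or_gt_of_ne hx0 with hneg | hpos
    · exact (((conv_analyticAt t ht hmn hdn x).contDiffAt).congr_of_eventuallyEq
        (hnbn hneg)).contDiffWithinAt
    · exact (((conv_analyticAt t ht hmp hdp x).contDiffAt).congr_of_eventuallyEq
        (hnbp hpos)).contDiffWithinAt
  · -- weighted bounds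
    intro k l
    obtain ⟨Cp, hCp⟩ := conv_decay t ht hmp hdp k l
    obtain ⟨Cn, hCn⟩ := conv_decay t ht hmn hdn k l
    refine ⟨max Cp Cn, fun u hu => ?_⟩
    have hw : (0:ℝ) < 1 + |u| ^ l := by positivity
    rcases lt_or_gt_of_ne hu with hneg | hpos
    · rw [abs_mul, abs_of_pos hw, hDeqn k u hneg]
      exact le_trans (hCn u) (le_max_right _ _)
    · rw [abs_mul, abs_of_pos hw, hDeqp k u hpos]
      exact le_trans (hCp u) (le_max_left _ _)
  · -- boundary conditions
    intro k
    constructor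
    · have hcont : Continuous (iteratedDeriv (2 * k + 1) (conv t (fun y : ℝ => H |y|))) :=
        (conv_iteratedDeriv_differentiable t ht hmp hdp (2 * k + 1)).continuous
      have h0 : iteratedDeriv (2 * k + 1) (conv t (fun y : ℝ => H |y|)) 0 = 0 :=
        conv_odd_iteratedDeriv_zero t hevp k
      have h1 : Tendsto (iteratedDeriv (2 * k + 1) (conv t (fun y : ℝ => H |y|)))
          (𝓝[>] (0:ℝ)) (𝓝 0) := by
        have h2 : Tendsto (iteratedDeriv (2 * k + 1) (conv t (fun y : ℝ => H |y|)))
            (𝓝[>] (0:ℝ)) (𝓝 (iteratedDeriv (2 * k + 1) (conv t (fun y : ℝ => H |y|)) 0)) :=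
          (hcont.tendsto 0).mono_left (nhdsWithin_le_nhds (s := Ioi (0:ℝ)))
        rwa [h0] at h2
      exact tendsto_nhdsWithin_congr
        (fun x hx => (hDeqp (2 * k + 1) x (mem_Ioi.1 hx)).symm) h1
    · have hcont : Continuous (iteratedDeriv (2 * k + 1) (conv t (fun y : ℝ => H (-|y|)))) :=
        (conv_iteratedDeriv_differentiable t ht hmn hdn (2 * k + 1)).continuous
      have h0 : iteratedDeriv (2 * k + 1) (conv t (fun y : ℝ => H (-|y|))) 0 = 0 :=
        conv_odd_iteratedDeriv_zero t hevn k
      have h1 : Tendsto (iteratedDeriv (2 * k + 1) (conv t (fun y : ℝ => H (-|y|))))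
          (𝓝[<] (0:ℝ)) (𝓝 0) := by
        have h2 : Tendsto (iteratedDeriv (2 * k + 1) (conv t (fun y : ℝ => H (-|y|))))
            (𝓝[<] (0:ℝ)) (𝓝 (iteratedDeriv (2 * k + 1) (conv t (fun y : ℝ => H (-|y|))) 0)) :=
          (hcont.tendsto 0).mono_left (nhdsWithin_le_nhds (s := Iio (0:ℝ)))
        rwa [h0] at h2
      exact tendsto_nhdsWithin_congr
        (fun x hx => (hDeqn (2 * k + 1) x (mem_Iio.1 hx)).symm) h1
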